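/- Let c > 0 and M ≥ 0, set T* = c^{1/2}·M, and let X : [0,∞) → ℝ be a differentiable nonnegative function such that X'(t) ≤ c·X(t)³ − X(t) for all t ≥ 0 and ∫₀^{T} X(s) ds ≤ M for every T > 0 (it suffices that ∫₀^{T*} X(s) ds ≤ M when T* > 0). Then X(t) ≤ c^{−1/2} for all t ≥ T*. -/

import Mathlib

/-! Let `K = c^{-1/2}`. If `X > K` on all of `[0, t]` with `t > c^{1/2} M`, the integral of `X` over
`[0, t]` would exceed `t K > M`; so `X` reaches the threshold `K` at some time `s ≤ t`. Since
`c K³ = K`, the threshold is an equilibrium of `y' = c y³ - y`, and near it the right-hand side is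
bounded by `L (y - K)`; comparison with the barrier `K + η e^{(L+1)(s-b)}` then shows that `X` cannot
cross `K` after time `s`. The endpoint `t = c^{1/2} M`, which is `0` when `M = 0`, follows by
right-continuity. -/

open Set

theorem image_le_of_deriv_right_le_mul_sub {f f' : ℝ → ℝ} {a b K L δ : ℝ} (hL : 0 ≤ L) (hδ : 0 < δ)
    (hf : ContinuousOn f (Icc a b)) (hf' : ∀ x ∈ Ico a b, HasDerivWithinAt f (f' x) (Ici x) x)
    (ha : f a ≤ K) (bound : ∀ x ∈ Ico a b, K ≤ f x → f x ≤ K + δ → f' x ≤ L * (f x - K)) :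
    ∀ ⦃x⦄, x ∈ Icc a b → f x ≤ K := by
  intro x hx
  refine le_of_forall_pos_le_add fun ε hε => ?_
  set η := min ε δ
  have hη : 0 < η := lt_min hε hδ
  set B : ℝ → ℝ := fun s => K + η * Real.exp ((L + 1) * (s - b))
  have hB : ∀ s, HasDerivAt B (η * Real.exp ((L + 1) * (s - b)) * (L + 1)) s := by
    intro s
    have := ((((hasDerivAt_id' s).sub_const b).const_mul (L + 1)).exp.const_mul η).const_add K
    exact this.congr_deriv (by ring)
  have hB_le : ∀ s ≤ b, B s ≤ K + η := by
    intro s hs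
    have : Real.exp ((L + 1) * (s - b)) ≤ 1 :=
      Real.exp_le_one_iff.mpr (mul_nonpos_of_nonneg_of_nonpos (by linarith) (by linarith))
    simp only [B]
    nlinarith
  have hfB : f x ≤ B x := by
    refine image_le_of_deriv_right_lt_deriv_boundary hf hf' ?_ hB ?_ hx
    · simp only [B]
      linarith [mul_pos hη (Real.exp_pos ((L + 1) * (a - b)))]
    · intro s hs hfs
      have hpos : 0 < η * Real.exp ((L + 1) * (s - b)) := by positivity
      have hK : K ≤ f s := by rw [hfs]; simp only [B]; linarith
      have hKδ : f s ≤ K + δ := by rw [hfs]; linarith [hB_le s hs.2.le, min_le_right ε δ]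
      calc f' s ≤ L * (f s - K) := bound s hs hK hKδ
        _ = L * (η * Real.exp ((L + 1) * (s - b))) := by rw [hfs]; simp only [B]; ring
        _ < _ := by nlinarith
  linarith [hB_le x hx.2, min_le_left ε δ]

theorem mul_cube_sub_le {c K y : ℝ} (hK : 0 ≤ K) (hcK : c * K ^ 2 = 1) (hKy : K ≤ y)
    (hy : y ≤ K + 1) : c * y ^ 3 - y ≤ 3 * c * (K + 1) ^ 2 * (y - K) := by
  have hc : 0 ≤ c := by nlinarith [sq_nonneg K]
  have hcube : c * y ^ 3 - y ≤ c * (y ^ 3 - K ^ 3) := by nlinarith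
  have hsq : y ^ 2 + y * K + K ^ 2 ≤ 3 * (K + 1) ^ 2 := by nlinarith
  calc c * y ^ 3 - y ≤ c * ((y - K) * (y ^ 2 + y * K + K ^ 2)) := by linarith [hcube]
    _ ≤ c * ((y - K) * (3 * (K + 1) ^ 2)) := by gcongr
    _ = _ := by ring

theorem exists_sub_mul_le_integral {f : ℝ → ℝ} {a b : ℝ} (hab : a ≤ b)
    (hf : ContinuousOn f (Icc a b)) : ∃ s ∈ Icc a b, (b - a) * f s ≤ ∫ x in a..b, f x := by
  obtain ⟨s, hs, hmin⟩ := isCompact_Icc.exists_isMinOn (nonempty_Icc.mpr hab) hf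
  refine ⟨s, hs, ?_⟩
  have := intervalIntegral.integral_mono_on hab (intervalIntegrable_const (μ := MeasureTheory.volume))
    (hf.intervalIntegrable_of_Icc hab) fun x hx => hmin hx
  simpa using this

theorem image_le_of_deriv_right_le_mul_cube_sub {X X' : ℝ → ℝ} {a b c K : ℝ} (hK : 0 ≤ K)
    (hcK : c * K ^ 2 = 1) (hX : ContinuousOn X (Icc a b))
    (hX' : ∀ t ∈ Ico a b, HasDerivWithinAt X (X' t) (Ici t) t)
    (hineq : ∀ t ∈ Ico a b, X' t ≤ c * X t ^ 3 - X t) (ha : X a ≤ K) :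
    ∀ ⦃t⦄, t ∈ Icc a b → X t ≤ K := by
  have hc : 0 ≤ c := by nlinarith [sq_nonneg K]
  exact image_le_of_deriv_right_le_mul_sub (L := 3 * c * (K + 1) ^ 2) (by positivity) one_pos
    hX hX' ha fun t ht hKt htK => (hineq t ht).trans (mul_cube_sub_le hK hcK hKt htK)

theorem eventually_below_threshold_general (c M : ℝ) (hc : 0 < c) (hM : 0 ≤ M)
    (X X' : ℝ → ℝ)
    (hX : ∀ t, 0 ≤ t → HasDerivAt X (X' t) t)
    (hineq : ∀ t, 0 ≤ t → X' t ≤ c * X t ^ 3 - X t)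
    (hint : ∀ T, 0 < T → ∫ s in (0:ℝ)..T, X s ≤ M) :
    ∀ t, Real.sqrt c * M ≤ t → X t ≤ (Real.sqrt c)⁻¹ := by
  set K := (Real.sqrt c)⁻¹
  have hK : 0 < K := by positivity
  have hcK : c * K ^ 2 = 1 := by simp [K, inv_pow, Real.sq_sqrt hc.le, hc.ne']
  have hMK : Real.sqrt c * M * K = M := by
    rw [mul_comm _ M, mul_assoc, mul_inv_cancel₀ (Real.sqrt_pos.mpr hc).ne', mul_one]
  have hcont : ContinuousOn X (Ici 0) := fun t ht => (hX t ht).continuousAt.continuousWithinAt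
  have hreach : ∀ t, Real.sqrt c * M < t → ∃ s ∈ Icc 0 t, X s ≤ K := by
    intro t ht
    have ht0 : 0 < t := lt_of_le_of_lt (by positivity) ht
    obtain ⟨s, hs, hmean⟩ := exists_sub_mul_le_integral ht0.le (hcont.mono Icc_subset_Ici_self)
    refine ⟨s, hs, le_of_not_gt fun hKs => ?_⟩
    have : M < t * X s := calc
      M = Real.sqrt c * M * K := hMK.symm
      _ < t * K := by gcongr
      _ < t * X s := by gcongr
    linarith [hint t ht0]
  have hafter : ∀ t, Real.sqrt c * M < t → X t ≤ K := by
    intro t ht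
    obtain ⟨s, ⟨hs0, hst⟩, hXs⟩ := hreach t ht
    exact image_le_of_deriv_right_le_mul_cube_sub hK.le hcK
      (hcont.mono (Icc_subset_Ici_iff hst |>.mpr hs0))
      (fun u hu => (hX u (hs0.trans hu.1)).hasDerivWithinAt)
      (fun u hu => hineq u (hs0.trans hu.1)) hXs ⟨hst, le_rfl⟩
  intro t ht
  rcases ht.lt_or_eq with ht | rfl
  · exact hafter t ht
  · exact le_of_tendsto ((hX _ (by positivity)).continuousAt.tendsto.mono_left nhdsWithin_le_nhds)
      (eventually_nhdsWithin_of_forall (s := Ioi _) hafter)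

/-- Any nonnegative solution of `X' ≤ cX³ − X` with time integral bounded by `M`
satisfies `X t ≤ c^{-1/2}` for all `t ≥ T* = c^{1/2} M`. -/
theorem eventually_below_threshold (c M : ℝ) (hc : 0 < c) (hM : 0 ≤ M)
    (X X' : ℝ → ℝ)
    (hX : ∀ t, 0 ≤ t → HasDerivAt X (X' t) t)
    (hXnonneg : ∀ t, 0 ≤ t → 0 ≤ X t)
    (hineq : ∀ t, 0 ≤ t → X' t ≤ c * X t ^ 3 - X t)
    (hint : ∀ T, 0 < T → ∫ s in (0:ℝ)..T, X s ≤ M) :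
    ∀ t, Real.sqrt c * M ≤ t → X t ≤ (Real.sqrt c)⁻¹ :=
  eventually_below_threshold_general c M hc hM X X' hX hineq hint
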